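/- Let ε ∈ (0, 1/2], σ ≥ 1, N ≥ 4 even. Set x_i = -σε ln(1 - 2(1-ε)i/N) for 0 ≤ i ≤ N/2 and h_i = x_{i+1} - x_i. Then for 0 ≤ i ≤ N/2-2, h_i^{k+1} ε^{-(k+1)} e^{-x_i/ε} ≤ C N^{-(k+1)} holds for any integer k ≥ 0 with k+1 ≤ σ, with a constant C depending only on σ and k. -/

import Mathlib

/-!
With `s_j = 1 - 2(1-ε) j / N` the mesh is `x_j = -σ ε log s_j`, so `e^{-x_i/ε} = s_i^σ ≤ s_i^{k+1}`
and `h_i = σ ε log (s_i / s_{i+1}) ≤ σ ε (s_i - s_{i+1}) / s_{i+1}`. Hence the quantity is at most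
`(σ (s_i - s_{i+1}) s_i / s_{i+1})^{k+1}`. For `i ≤ N/2 - 2` one has `s_{i+1} ≥ ε + (s_i - s_{i+1})`,
so `s_i ≤ 2 s_{i+1}`, and `s_i - s_{i+1} = 2(1-ε)/N ≤ 2/N` gives the bound `(4σ/N)^{k+1}`.
-/

open Real

lemma log_add_sub_log_le_div {t a : ℝ} (ht : 0 < t) (hta : 0 < t + a) :
    log (t + a) - log t ≤ a / t := by
  rw [← log_div hta.ne' ht.ne']
  calc log ((t + a) / t) ≤ (t + a) / t - 1 := log_le_sub_one_of_pos (div_pos hta ht)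
    _ = a / t := by field_simp; ring

lemma mul_log_add_sub_log_pow_mul_rpow_le {σ t a : ℝ} {n : ℕ} (hσ : 0 ≤ σ) (ht : 0 < t)
    (ha : 0 ≤ a) (hat : a ≤ t) (hta : t + a ≤ 1) (hnσ : (n : ℝ) ≤ σ) :
    (σ * (log (t + a) - log t)) ^ n * (t + a) ^ σ ≤ (2 * σ * a) ^ n := by
  have hta0 : 0 < t + a := by linarith
  have hlog : 0 ≤ log (t + a) - log t := by
    linarith [log_le_log ht (le_add_of_nonneg_right ha)]
  have hrpow : (t + a) ^ σ ≤ (t + a) ^ n := by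
    rw [← rpow_natCast]
    exact rpow_le_rpow_of_exponent_ge hta0 hta hnσ
  calc (σ * (log (t + a) - log t)) ^ n * (t + a) ^ σ
      ≤ (σ * (a / t)) ^ n * (t + a) ^ n := by
        gcongr
        exact log_add_sub_log_le_div ht hta0
    _ = (σ * a * ((t + a) / t)) ^ n := by rw [← mul_pow]; congr 1; field_simp
    _ ≤ (σ * a * 2) ^ n := by
        gcongr
        rw [div_le_iff₀ ht]
        linarith
    _ = (2 * σ * a) ^ n := by ring

lemma exp_neg_div_of_eq_mul_log {σ ε s : ℝ} (hε : ε ≠ 0) (hs : 0 < s) :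
    exp (-(-σ * ε * log s) / ε) = s ^ σ := by
  rw [rpow_def_of_pos hs]
  congr 1
  field_simp

section BakhvalovMesh

variable {ε : ℝ} {N : ℕ}

/-- The argument of the logarithm in the mesh node `x_j = -σ ε log (bakhvalovArg ε N j)`. -/
noncomputable def bakhvalovArg (ε : ℝ) (N j : ℕ) : ℝ := 1 - 2 * (1 - ε) * j / N

lemma bakhvalovArg_eq_succ_add (ε : ℝ) (N j : ℕ) :
    bakhvalovArg ε N j = bakhvalovArg ε N (j + 1) + 2 * (1 - ε) / N := by
  simp only [bakhvalovArg]
  push_cast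
  ring

lemma bakhvalovArg_le_one (hε : ε ≤ 1) (j : ℕ) : bakhvalovArg ε N j ≤ 1 := by
  have : 0 ≤ 2 * (1 - ε) * j / N := by
    have : 0 ≤ 1 - ε := by linarith
    positivity
  simp only [bakhvalovArg]
  linarith

lemma add_step_le_bakhvalovArg_succ (hε : ε ≤ 1) {i : ℕ} (hi : 2 * (i + 2) ≤ N) :
    ε + 2 * (1 - ε) / N ≤ bakhvalovArg ε N (i + 1) := by
  have hN : (0 : ℝ) < N := by exact_mod_cast (show 0 < N by omega)
  have hiN : 2 * ((i : ℝ) + 2) ≤ N := by exact_mod_cast hi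
  have key : (1 - ε) * (2 * ((i : ℝ) + 2)) ≤ (1 - ε) * N :=
    mul_le_mul_of_nonneg_left hiN (by linarith)
  have : bakhvalovArg ε N (i + 1) - (ε + 2 * (1 - ε) / N)
      = ((1 - ε) * N - (1 - ε) * (2 * ((i : ℝ) + 2))) / N := by
    simp only [bakhvalovArg]
    push_cast
    field_simp
    ring
  linarith [div_nonneg (sub_nonneg.mpr key) hN.le]

end BakhvalovMesh

theorem stmt_11_general (σ : ℝ) (k : ℕ) (hkσ : (k : ℝ) + 1 ≤ σ) :
    ∃ C > 0, ∀ (ε : ℝ) (N : ℕ) (x : ℕ → ℝ),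
      0 < ε → ε ≤ 1/2 → 4 ≤ N → Even N →
      (∀ i ≤ N / 2, x i = -σ * ε * Real.log (1 - 2 * (1 - ε) * i / N)) →
      ∀ i ≤ N / 2 - 2,
        (x (i + 1) - x i) ^ (k + 1) * (ε⁻¹) ^ (k + 1) * Real.exp (-x i / ε) ≤
          C * ((N : ℝ) ^ (k + 1))⁻¹ := by
  have hσ : 0 < σ := by linarith [k.cast_nonneg (α := ℝ)]
  refine ⟨(4 * σ) ^ (k + 1), by positivity, fun ε N x hε hε2 hN4 _ hx i hi => ?_⟩
  have hN : (0 : ℝ) < N := by exact_mod_cast (show 0 < N by omega)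
  set a := 2 * (1 - ε) / (N : ℝ)
  set t := bakhvalovArg ε N (i + 1)
  have hat : ε + a ≤ t := add_step_le_bakhvalovArg_succ (by linarith) (by omega)
  have ha : 0 ≤ a := div_nonneg (by linarith) hN.le
  have haN : a ≤ 2 / N := div_le_div_of_nonneg_right (by linarith) hN.le
  have hxi : x i = -σ * ε * log (t + a) := by
    rw [hx i (by omega)]
    exact congrArg _ (congrArg _ (bakhvalovArg_eq_succ_add ε N i))
  have hxi1 : x (i + 1) = -σ * ε * log t := hx (i + 1) (by omega)
  calc (x (i + 1) - x i) ^ (k + 1) * ε⁻¹ ^ (k + 1) * exp (-x i / ε)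
      = (σ * (log (t + a) - log t)) ^ (k + 1) * (t + a) ^ σ := by
        rw [hxi, exp_neg_div_of_eq_mul_log hε.ne' (by linarith), hxi1, ← mul_pow]
        congr 2
        field_simp
        ring
    _ ≤ (2 * σ * a) ^ (k + 1) :=
        mul_log_add_sub_log_pow_mul_rpow_le hσ.le (by linarith) ha (by linarith)
          (by rw [← bakhvalovArg_eq_succ_add]; exact bakhvalovArg_le_one (by linarith) i)
          (by exact_mod_cast hkσ)
    _ ≤ (4 * σ / N) ^ (k + 1) := by
        gcongr
        calc 2 * σ * a ≤ 2 * σ * (2 / N) := by gcongr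
          _ = 4 * σ / N := by ring
    _ = (4 * σ) ^ (k + 1) * ((N : ℝ) ^ (k + 1))⁻¹ := by rw [div_pow, div_eq_mul_inv]

/-- Key interpolation estimate on the fine part of the Bakhvalov-type mesh:
for `0 ≤ i ≤ N/2 - 2`, `h_i^{k+1} ε^{-(k+1)} e^{-x_i/ε} ≤ C N^{-(k+1)}` with `C`
depending only on `σ` and `k`. -/
theorem stmt_11 (σ : ℝ) (k : ℕ) (hσ : 1 ≤ σ) (hkσ : (k : ℝ) + 1 ≤ σ) :
    ∃ C > 0, ∀ (ε : ℝ) (N : ℕ) (x : ℕ → ℝ),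
      0 < ε → ε ≤ 1/2 → 4 ≤ N → Even N →
      (∀ i ≤ N / 2, x i = -σ * ε * Real.log (1 - 2 * (1 - ε) * i / N)) →
      ∀ i ≤ N / 2 - 2,
        (x (i + 1) - x i) ^ (k + 1) * (ε⁻¹) ^ (k + 1) * Real.exp (-x i / ε) ≤
          C * ((N : ℝ) ^ (k + 1))⁻¹ :=
  stmt_11_general σ k hkσ
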